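/- arXiv:2208.14266 — 6 statements merged into one kernel-verified Lean document; each statement's English description precedes it below -/
import Mathlib

section
/- Let q ≥ 2 and N be positive integers, and let m > 2 be a real number. Then the number of functions e : {1,…,N} → {0,1,…,q−1} with ∑_j e(j) ≤ N(q−1)/m is at most min_{0<x<1} ((1 − x^q)/(x^{(q−1)/m}(1 − x)))^N. -/
theorem stmt3 {q N : ℕ} (hq : 2 ≤ q) (hN : 0 < N) (m : ℝ) (hm : 2 < m) :
    (Nat.card {e : Fin N → Fin q //
        (∑ j, ((e j : ℕ) : ℝ)) ≤ (N : ℝ) * (q - 1) / m} : ℝ) ≤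
      sInf ((fun x : ℝ => ((1 - x ^ q) / (x ^ (((q : ℝ) - 1) / m) * (1 - x))) ^ N) ''
        Set.Ioo (0 : ℝ) 1) := by
  classical
  apply le_csInf
  · exact Set.Nonempty.image _ ⟨1/2, by constructor <;> norm_num⟩
  rintro b ⟨x, ⟨hx0, hx1⟩, rfl⟩
  simp only
  set P : (Fin N → Fin q) → Prop :=
    fun e => (∑ j, ((e j : ℕ) : ℝ)) ≤ (N : ℝ) * ((q : ℝ) - 1) / m with hP
  set T : Finset (Fin N → Fin q) := Finset.univ.filter P with hT
  have hcard : (Nat.card {e : Fin N → Fin q // P e} : ℝ) = (T.card : ℝ) := by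
    rw [Nat.card_eq_fintype_card, Fintype.card_subtype]
  set r : ℝ := (N : ℝ) * ((q : ℝ) - 1) / m with hr
  have hxr : (0 : ℝ) < x ^ r := Real.rpow_pos_of_pos hx0 r
  -- geometric sum
  have hgeom : (∑ i : Fin q, x ^ (i : ℕ)) = (1 - x ^ q) / (1 - x) := by
    rw [Fin.sum_univ_eq_sum_range (fun i => x ^ i) q, geom_sum_eq (ne_of_lt hx1) q]
    rw [show (1 - x ^ q) / (1 - x) = -(x ^ q - 1) / -(x - 1) by ring_nf]
    rw [neg_div_neg_eq]
  have key : (T.card : ℝ) * x ^ r ≤ ((1 - x ^ q) / (1 - x)) ^ N := by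
    calc (T.card : ℝ) * x ^ r = ∑ _e ∈ T, x ^ r := by
          rw [Finset.sum_const, nsmul_eq_mul]
      _ ≤ ∑ e ∈ T, x ^ (∑ j, (e j : ℕ)) := by
          apply Finset.sum_le_sum
          intro e he
          have hPe : P e := (Finset.mem_filter.mp he).2
          have h1 : x ^ r ≤ x ^ (∑ j, ((e j : ℕ) : ℝ)) :=
            Real.rpow_le_rpow_of_exponent_ge hx0 hx1.le hPe
          have h2 : (∑ j, ((e j : ℕ) : ℝ)) = ((∑ j, (e j : ℕ) : ℕ) : ℝ) := by
            push_cast; ring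
          rwa [h2, Real.rpow_natCast] at h1
      _ ≤ ∑ e : Fin N → Fin q, x ^ (∑ j, (e j : ℕ)) := by
          apply Finset.sum_le_sum_of_subset_of_nonneg (Finset.subset_univ T)
          intro e _ _
          positivity
      _ = (∑ i : Fin q, x ^ (i : ℕ)) ^ N := by
          have hpow : (∑ i : Fin q, x ^ (i : ℕ)) ^ N
              = ∏ _j : Fin N, ∑ i : Fin q, x ^ (i : ℕ) := by
            rw [Finset.prod_const, Finset.card_univ, Fintype.card_fin]
          rw [hpow, Finset.prod_univ_sum, Fintype.piFinset_univ]
          exact Finset.sum_congr rfl fun e _ => (Finset.prod_pow_eq_pow_sum _ _ _).symm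
      _ = ((1 - x ^ q) / (1 - x)) ^ N := by rw [hgeom]
  have hRHS : ((1 - x ^ q) / (x ^ (((q : ℝ) - 1) / m) * (1 - x))) ^ N
      = ((1 - x ^ q) / (1 - x)) ^ N / x ^ r := by
    have h1 : (1 - x ^ q) / (x ^ (((q : ℝ) - 1) / m) * (1 - x))
        = ((1 - x ^ q) / (1 - x)) / x ^ (((q : ℝ) - 1) / m) := by
      rw [mul_comm, ← div_div]
    rw [h1, div_pow, ← Real.rpow_natCast (x ^ (((q : ℝ) - 1) / m)) N,
      ← Real.rpow_mul hx0.le]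
    congr 1
    rw [hr]; ring
  rw [hcard, hRHS, le_div_iff₀ hxr]
  exact key
end

section
/- Let q be a prime power and N a positive integer. The number of functions e : {1,…,N} → {0,1,…,q−1} with ∑_j e(j) ≤ N(q−1)/3 is at most c_q^N, where c_q = inf_{0<x<1} (1 − x^q)/(x^{(q−1)/3}(1 − x)). -/
open Finset Real

theorem stmt4 {q N : ℕ} (hpp : IsPrimePow q) (hN : 0 < N) :
    (Nat.card {e : Fin N → Fin q //
        (∑ j, ((e j : ℕ) : ℝ)) ≤ (N : ℝ) * (q - 1) / 3} : ℝ) ≤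
      (sInf ((fun x : ℝ => (1 - x ^ q) / (x ^ (((q : ℝ) - 1) / 3) * (1 - x))) ''
        Set.Ioo (0 : ℝ) 1)) ^ N := by
  classical
  have hq : 1 < q := hpp.one_lt
  set f : ℝ → ℝ := fun x => (1 - x ^ q) / (x ^ (((q : ℝ) - 1) / 3) * (1 - x)) with hf
  set P : (Fin N → Fin q) → Prop :=
    fun e => (∑ j, ((e j : ℕ) : ℝ)) ≤ (N : ℝ) * (q - 1) / 3 with hP
  set a : ℝ := (Nat.card {e : Fin N → Fin q // P e} : ℝ) with ha
  have ha0 : 0 ≤ a := by positivity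
  have hcard : a = (((univ : Finset (Fin N → Fin q)).filter P).card : ℝ) := by
    rw [ha, Nat.card_eq_fintype_card, Fintype.card_subtype]
  have hfpos : ∀ x ∈ Set.Ioo (0:ℝ) 1, 0 < f x := by
    rintro x ⟨hx0, hx1⟩
    have hxq : x ^ q < 1 := pow_lt_one₀ hx0.le hx1 (by omega)
    have : (0:ℝ) < x ^ (((q:ℝ) - 1) / 3) := rpow_pos_of_pos hx0 _
    apply div_pos (by linarith) (by nlinarith)
  have key : ∀ x ∈ Set.Ioo (0:ℝ) 1, a ≤ f x ^ N := by
    rintro x ⟨hx0, hx1⟩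
    have hxq : x ^ q < 1 := pow_lt_one₀ hx0.le hx1 (by omega)
    have hxe : ∀ y : ℝ, (0:ℝ) < x ^ y := fun y => rpow_pos_of_pos hx0 y
    have h1 : a * x ^ ((N : ℝ) * ((q:ℝ) - 1) / 3) ≤
        ∑ e : Fin N → Fin q, x ^ ((∑ j, ((e j : ℕ) : ℝ))) := by
      rw [hcard]
      calc (((univ : Finset (Fin N → Fin q)).filter P).card : ℝ) * x ^ ((N:ℝ)*((q:ℝ)-1)/3)
          = ∑ _e ∈ (univ : Finset (Fin N → Fin q)).filter P, x ^ ((N:ℝ)*((q:ℝ)-1)/3) := by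
            rw [Finset.sum_const, nsmul_eq_mul]
        _ ≤ ∑ e ∈ (univ : Finset (Fin N → Fin q)).filter P,
              x ^ ((∑ j, ((e j : ℕ) : ℝ))) := by
            apply Finset.sum_le_sum
            intro e he
            exact Real.rpow_le_rpow_of_exponent_ge hx0 hx1.le (Finset.mem_filter.mp he).2
        _ ≤ ∑ e : Fin N → Fin q, x ^ ((∑ j, ((e j : ℕ) : ℝ))) := by
            apply Finset.sum_le_sum_of_subset_of_nonneg (Finset.filter_subset _ _)
            intro e _ _; exact (hxe _).le
    have hgeom : ∑ k : Fin q, x ^ (k : ℕ) = (1 - x ^ q) / (1 - x) := by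
      rw [Fin.sum_univ_eq_sum_range (fun k => x ^ k), geom_sum_eq (by linarith)]
      rw [div_eq_div_iff (by linarith) (by linarith)]; ring
    have h2 : ∑ e : Fin N → Fin q, x ^ ((∑ j, ((e j : ℕ) : ℝ))) =
        ((1 - x ^ q) / (1 - x)) ^ N := by
      have step : ∀ e : Fin N → Fin q,
          x ^ ((∑ j, ((e j : ℕ) : ℝ))) = ∏ j, x ^ ((e j : ℕ)) := by
        intro e
        rw [← Nat.cast_sum, Real.rpow_natCast, ← Finset.prod_pow_eq_pow_sum]
      have h3 : (∏ _j : Fin N, ∑ k : Fin q, x ^ (k:ℕ)) =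
          ∑ e ∈ Fintype.piFinset (fun _ : Fin N => (univ : Finset (Fin q))),
            ∏ j, x ^ ((e j : ℕ)) :=
        Finset.prod_univ_sum (fun _ : Fin N => (univ : Finset (Fin q))) (fun _ k => x ^ (k:ℕ))
      rw [Fintype.piFinset_univ] at h3
      simp_rw [step]
      rw [← h3, hgeom, Finset.prod_const, Finset.card_univ, Fintype.card_fin]
    -- turn h1, h2 into a ≤ f x ^ N
    have hxN : x ^ ((N : ℝ) * ((q:ℝ) - 1) / 3) = (x ^ (((q:ℝ) - 1) / 3)) ^ N := by
      rw [← Real.rpow_natCast (x ^ (((q:ℝ) - 1) / 3)) N, ← Real.rpow_mul hx0.le]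
      ring_nf
    have hfxN : f x ^ N = ((1 - x ^ q) / (1 - x)) ^ N / x ^ ((N : ℝ) * ((q:ℝ) - 1) / 3) := by
      rw [hxN, hf, ← div_pow]
      congr 1
      field_simp
    rw [hfxN, le_div_iff₀ (hxe _)]
    calc a * x ^ ((N : ℝ) * ((q:ℝ) - 1) / 3) ≤ _ := h1
      _ = _ := h2
  -- take N-th roots
  set S := (fun x : ℝ => (1 - x ^ q) / (x ^ (((q : ℝ) - 1) / 3) * (1 - x))) '' Set.Ioo (0:ℝ) 1
    with hS
  have hSne : S.Nonempty := (Set.nonempty_Ioo.mpr one_pos).image _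
  set b : ℝ := a ^ ((N : ℝ)⁻¹) with hb
  have hb0 : 0 ≤ b := rpow_nonneg ha0 _
  have hNne : (N : ℝ) ≠ 0 := Nat.cast_ne_zero.mpr hN.ne'
  have hblb : ∀ y ∈ S, b ≤ y := by
    rintro y ⟨x, hx, rfl⟩
    have := key x hx
    have hfx := (hfpos x hx).le
    calc b ≤ (f x ^ N) ^ ((N:ℝ)⁻¹) :=
          Real.rpow_le_rpow ha0 this (by positivity)
      _ = f x := by
          rw [← Real.rpow_natCast (f x) N, ← Real.rpow_mul hfx,
            mul_inv_cancel₀ hNne, rpow_one]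
  have hbc : b ≤ sInf S := le_csInf hSne hblb
  have hab : a = b ^ N := by
    rw [hb, ← Real.rpow_natCast (a ^ ((N:ℝ)⁻¹)) N, ← Real.rpow_mul ha0,
      inv_mul_cancel₀ hNne, rpow_one]
  rw [hab]
  exact pow_le_pow_left₀ hb0 hbc N
end

section
/- For every integer q ≥ 2, the quantity c_q = inf_{0<x<1} (1 − x^q)/(x^{(q−1)/3}(1 − x)) satisfies c_q ≥ 0.8414·q. -/
/-!
Put `expGap t = exp (t / 3) * (1 - exp (-t)) = exp (t / 3) - exp (-(2 t / 3))`. For `x = exp (-u)`,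
`x ^ ((q - 1) / 3) * (1 - x) = exp (-(q u / 3)) * expGap u` and
`1 - x ^ q = exp (-(q u / 3)) * expGap (q u)`, so the claim is
`0.8414 q expGap u ≤ expGap (q u)` for `u ≥ 0`, which holds for every real `q ≥ 1`. For `u ≤ 2`
it follows from `expGap u ≤ u` and `0.8414 t ≤ expGap t`; for `u ≥ 2` from
`exp ((q - 1) u / 3) expGap u ≤ expGap (q u)` and `0.8414 q ≤ exp (2 (q - 1) / 3)`.

The bound `0.8414 t ≤ expGap t` is nearly sharp: `expGap t / t` has minimum `0.84143…` near
`t = 2.15`. Near `0` it follows from `expGap t = 2 exp (-t/6) sinh (t/2) ≥ t (1 - t/6)`. Further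
out, on each of finitely many intervals, `exp (t / 3)` lies above a tangent line and
`exp (-(2 t / 3))` below a chord, so `expGap t - 0.8414 t` is bounded below by an affine function;
its values at the endpoints are checked with Taylor bounds for `exp`.
-/

open Real Set
open scoped Nat

noncomputable def expGap (t : ℝ) : ℝ := exp (t / 3) * (1 - exp (-t))

lemma expGap_eq_sub (t : ℝ) : expGap t = exp (t / 3) - exp (-(2 * t / 3)) := by
  rw [expGap, mul_sub, mul_one, ← exp_add]
  ring_nf

lemma expGap_eq_mul_sinh (t : ℝ) : expGap t = exp (-(t / 6)) * (2 * sinh (t / 2)) := by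
  rw [expGap_eq_sub, sinh_eq, mul_div_cancel₀ _ two_ne_zero, mul_sub, ← exp_add, ← exp_add]
  ring_nf

lemma exp_mul_one_add_sub_le_exp (a b : ℝ) : exp a * (1 + (b - a)) ≤ exp b := by
  calc exp a * (1 + (b - a)) ≤ exp a * exp (b - a) := by
        gcongr; linarith [add_one_le_exp (b - a)]
    _ = exp b := by rw [← exp_add, add_sub_cancel]

lemma sinh_le_self_add_cube {x : ℝ} (h₀ : 0 ≤ x) (h₁ : x ≤ 1) : sinh x ≤ x + 2 / 9 * x ^ 3 := by
  have hx : |x| = x := abs_of_nonneg h₀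
  have hpos := exp_bound (x := x) (by rw [hx]; exact h₁) (n := 3) (by norm_num)
  have hneg := exp_bound (x := -x) (by rw [abs_neg, hx]; exact h₁) (n := 3) (by norm_num)
  rw [abs_neg, hx] at hneg
  rw [hx] at hpos
  simp only [Finset.sum_range_succ, Finset.sum_range_zero, Nat.factorial] at hpos hneg
  rw [sinh_eq]
  nlinarith [(abs_le.1 hpos).2, (abs_le.1 hneg).1]

lemma mul_one_sub_le_expGap {t : ℝ} (ht : 0 ≤ t) : t * (1 - t / 6) ≤ expGap t := by
  have h₁ : 1 - t / 6 ≤ exp (-(t / 6)) := by linarith [add_one_le_exp (-(t / 6))]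
  have h₂ : t ≤ 2 * sinh (t / 2) := by linarith [self_le_sinh_iff.2 (by linarith : 0 ≤ t / 2)]
  rw [expGap_eq_mul_sinh, mul_comm t]
  exact mul_le_mul h₁ h₂ ht (exp_pos _).le

lemma expGap_le_self {u : ℝ} (h₀ : 0 ≤ u) (h₂ : u ≤ 2) : expGap u ≤ u := by
  have hsinh := sinh_le_self_add_cube (x := u / 2) (by linarith) (by linarith)
  have hexp : u + u ^ 3 / 18 ≤ u * exp (u / 6) := by
    nlinarith [add_one_le_exp (u / 6), mul_nonneg h₀ (mul_nonneg h₀ (by linarith : 0 ≤ 3 - u))]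
  calc expGap u = exp (-(u / 6)) * (2 * sinh (u / 2)) := expGap_eq_mul_sinh u
    _ ≤ exp (-(u / 6)) * (u * exp (u / 6)) :=
        mul_le_mul_of_nonneg_left (by linarith) (exp_pos _).le
    _ = u := by rw [mul_left_comm, ← exp_add, neg_add_cancel, exp_zero, mul_one]

lemma expGap_nonneg {t : ℝ} (ht : 0 ≤ t) : 0 ≤ expGap t :=
  mul_nonneg (exp_pos _).le (sub_nonneg.2 (exp_le_one_iff.2 (by linarith)))

lemma exp_mul_expGap_le_expGap_mul {q u : ℝ} (hq : 1 ≤ q) (hu : 0 ≤ u) :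
    exp ((q - 1) * u / 3) * expGap u ≤ expGap (q * u) := by
  have hexp : exp ((q - 1) * u / 3) * exp (u / 3) = exp (q * u / 3) := by
    rw [← exp_add]; ring_nf
  have hdecay : exp (-(q * u)) ≤ exp (-u) := exp_le_exp.2 (by nlinarith)
  calc exp ((q - 1) * u / 3) * expGap u = exp (q * u / 3) * (1 - exp (-u)) := by
        rw [expGap, ← mul_assoc, hexp]
    _ ≤ expGap (q * u) := by rw [expGap]; gcongr

lemma mul_le_exp_two_mul_sub_one_div_three {q : ℝ} (hq : 1 ≤ q) :
    0.8414 * q ≤ exp (2 * (q - 1) / 3) := by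
  nlinarith [quadratic_le_exp_of_nonneg (x := 2 * (q - 1) / 3) (by linarith),
    sq_nonneg (q - 1 - 1 / 5)]

lemma mul_le_expGap_of_mem_Icc {c a b t₀ t : ℝ} (hab : a < b)
    (ha : c * a + exp (-(2 * a / 3)) ≤ exp (t₀ / 3) * (1 + (a - t₀) / 3))
    (hb : c * b + exp (-(2 * b / 3)) ≤ exp (t₀ / 3) * (1 + (b - t₀) / 3))
    (ht : t ∈ Icc a b) : c * t ≤ expGap t := by
  set w := (t - a) / (b - a)
  have hw₀ : 0 ≤ w := div_nonneg (by linarith [ht.1]) (by linarith)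
  have hw₁ : w ≤ 1 := (div_le_one (by linarith)).2 (by linarith [ht.2])
  have ht_eq : t = (1 - w) * a + w * b := by
    simp only [w]; field_simp [(sub_pos.2 hab).ne']; ring
  have tangent := exp_mul_one_add_sub_le_exp (t₀ / 3) (t / 3)
  have chord : exp (-(2 * t / 3)) ≤ (1 - w) * exp (-(2 * a / 3)) + w * exp (-(2 * b / 3)) := by
    have := convexOn_exp.2 (mem_univ (-(2 * a / 3))) (mem_univ (-(2 * b / 3)))
      (sub_nonneg.2 hw₁) hw₀ (by ring)
    rwa [smul_eq_mul, smul_eq_mul,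
      show (1 - w) * -(2 * a / 3) + w * -(2 * b / 3) = -(2 * t / 3) by rw [ht_eq]; ring] at this
  have hc : c * t = (1 - w) * (c * a) + w * (c * b) := by rw [ht_eq]; ring
  have hline : exp (t₀ / 3) * (1 + (t / 3 - t₀ / 3)) =
      (1 - w) * (exp (t₀ / 3) * (1 + (a - t₀) / 3)) +
        w * (exp (t₀ / 3) * (1 + (b - t₀) / 3)) := by
    rw [ht_eq]; ring
  rw [expGap_eq_sub]
  linarith [mul_le_mul_of_nonneg_left ha (sub_nonneg.2 hw₁), mul_le_mul_of_nonneg_left hb hw₀]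

lemma mul_le_expGap_of_le {c a t₀ t : ℝ} (hc : 3 * c ≤ exp (t₀ / 3))
    (ha : c * a + exp (-(2 * a / 3)) ≤ exp (t₀ / 3) * (1 + (a - t₀) / 3)) (ht : a ≤ t) :
    c * t ≤ expGap t := by
  have tangent := exp_mul_one_add_sub_le_exp (t₀ / 3) (t / 3)
  have hdecay : exp (-(2 * t / 3)) ≤ exp (-(2 * a / 3)) := exp_le_exp.2 (by linarith)
  rw [expGap_eq_sub]
  linarith [mul_le_mul_of_nonneg_right hc (sub_nonneg.2 ht)]

lemma mul_add_exp_neg_le_of_taylor {c a t₀ : ℝ} (n : ℕ) (ha : 0 ≤ a) (ht₀ : 0 ≤ t₀)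
    (hat₀ : t₀ ≤ a + 3)
    (h : c * a + (∑ i ∈ Finset.range (n + 1), (2 * a / 3) ^ i / i !)⁻¹
      ≤ (∑ i ∈ Finset.range (n + 1), (t₀ / 3) ^ i / i !) * (1 + (a - t₀) / 3)) :
    c * a + exp (-(2 * a / 3)) ≤ exp (t₀ / 3) * (1 + (a - t₀) / 3) := by
  have hpos : 0 < ∑ i ∈ Finset.range (n + 1), (2 * a / 3) ^ i / i ! :=
    Finset.sum_pos' (fun i _ ↦ by positivity) ⟨0, by simp⟩
  have hupper : exp (-(2 * a / 3)) ≤ (∑ i ∈ Finset.range (n + 1), (2 * a / 3) ^ i / i !)⁻¹ := by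
    rw [exp_neg]; exact inv_anti₀ hpos (sum_le_exp_of_nonneg (by positivity) _)
  have hlower := mul_le_mul_of_nonneg_right (sum_le_exp_of_nonneg (x := t₀ / 3) (by positivity)
    (n + 1)) (by linarith : 0 ≤ 1 + (a - t₀) / 3)
  linarith

theorem mul_le_expGap {t : ℝ} (ht : 0 ≤ t) : 0.8414 * t ≤ expGap t := by
  obtain h | h₁ := le_total t (19 / 20)
  · nlinarith [mul_one_sub_le_expGap ht]
  -- Breakpoints and tangency points found numerically, finer where the bound is tight.
  obtain h₂ | h₂ := le_total t (37 / 20)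
  · refine mul_le_expGap_of_mem_Icc (t₀ := 163 / 100) ?_
      (mul_add_exp_neg_le_of_taylor 9 ?_ ?_ ?_ ?_) (mul_add_exp_neg_le_of_taylor 9 ?_ ?_ ?_ ?_)
      ⟨h₁, h₂⟩ <;> norm_num [Finset.sum_range_succ, Nat.factorial]
  obtain h₃ | h₃ := le_total t (21 / 10)
  · refine mul_le_expGap_of_mem_Icc (t₀ := 103 / 50) ?_
      (mul_add_exp_neg_le_of_taylor 9 ?_ ?_ ?_ ?_) (mul_add_exp_neg_le_of_taylor 9 ?_ ?_ ?_ ?_)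
      ⟨h₂, h₃⟩ <;> norm_num [Finset.sum_range_succ, Nat.factorial]
  obtain h₄ | h₄ := le_total t (43 / 20)
  · refine mul_le_expGap_of_mem_Icc (t₀ := 107 / 50) ?_
      (mul_add_exp_neg_le_of_taylor 9 ?_ ?_ ?_ ?_) (mul_add_exp_neg_le_of_taylor 9 ?_ ?_ ?_ ?_)
      ⟨h₃, h₄⟩ <;> norm_num [Finset.sum_range_succ, Nat.factorial]
  obtain h₅ | h₅ := le_total t (11 / 5)
  · refine mul_le_expGap_of_mem_Icc (t₀ := 54 / 25) ?_
      (mul_add_exp_neg_le_of_taylor 9 ?_ ?_ ?_ ?_) (mul_add_exp_neg_le_of_taylor 9 ?_ ?_ ?_ ?_)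
      ⟨h₄, h₅⟩ <;> norm_num [Finset.sum_range_succ, Nat.factorial]
  obtain h₆ | h₆ := le_total t (63 / 25)
  · refine mul_le_expGap_of_mem_Icc (t₀ := 56 / 25) ?_
      (mul_add_exp_neg_le_of_taylor 9 ?_ ?_ ?_ ?_) (mul_add_exp_neg_le_of_taylor 9 ?_ ?_ ?_ ?_)
      ⟨h₅, h₆⟩ <;> norm_num [Finset.sum_range_succ, Nat.factorial]
  refine mul_le_expGap_of_le (t₀ := 139 / 50) ((sum_le_exp_of_nonneg ?_ 10).trans' ?_)
    (mul_add_exp_neg_le_of_taylor 9 ?_ ?_ ?_ ?_) h₆ <;>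
    norm_num [Finset.sum_range_succ, Nat.factorial]

lemma mul_expGap_le_expGap_mul {q u : ℝ} (hq : 1 ≤ q) (hu : 0 ≤ u) :
    0.8414 * q * expGap u ≤ expGap (q * u) := by
  have hgap := expGap_nonneg hu
  obtain hu₂ | hu₂ := le_total u 2
  · calc 0.8414 * q * expGap u ≤ 0.8414 * (q * u) := by
          rw [mul_assoc]; gcongr; exact expGap_le_self hu hu₂
      _ ≤ expGap (q * u) := mul_le_expGap (by positivity)
  · calc 0.8414 * q * expGap u ≤ exp ((q - 1) * u / 3) * expGap u := by
          gcongr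
          refine (mul_le_exp_two_mul_sub_one_div_three hq).trans (exp_le_exp.2 ?_)
          nlinarith
      _ ≤ expGap (q * u) := exp_mul_expGap_le_expGap_mul hq hu

lemma exp_neg_rpow_mul_one_sub (q u : ℝ) :
    exp (-u) ^ ((q - 1) / 3) * (1 - exp (-u)) = exp (-(q * u / 3)) * expGap u := by
  rw [← exp_mul, expGap, ← mul_assoc, ← exp_add]
  ring_nf

lemma one_sub_exp_neg_rpow (q u : ℝ) :
    1 - exp (-u) ^ q = exp (-(q * u / 3)) * expGap (q * u) := by
  rw [← exp_mul, expGap, ← mul_assoc, ← exp_add, neg_add_cancel, exp_zero, one_mul]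
  ring_nf

lemma mul_rpow_mul_one_sub_le {q x : ℝ} (hq : 1 ≤ q) (hx₀ : 0 < x) (hx₁ : x ≤ 1) :
    0.8414 * q * (x ^ ((q - 1) / 3) * (1 - x)) ≤ 1 - x ^ q := by
  obtain ⟨u, hu, rfl⟩ : ∃ u, 0 ≤ u ∧ exp (-u) = x :=
    ⟨-log x, by linarith [log_nonpos hx₀.le hx₁], by rw [neg_neg, exp_log hx₀]⟩
  rw [exp_neg_rpow_mul_one_sub, one_sub_exp_neg_rpow, mul_left_comm]
  exact mul_le_mul_of_nonneg_left (mul_expGap_le_expGap_mul hq hu) (exp_pos _).le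

theorem stmt6 {q : ℕ} (hq : 2 ≤ q) :
    0.8414 * q ≤
      sInf ((fun x : ℝ => (1 - x ^ q) / (x ^ (((q : ℝ) - 1) / 3) * (1 - x))) ''
        Set.Ioo (0 : ℝ) 1) := by
  refine le_csInf ((Set.nonempty_Ioo.2 zero_lt_one).image _) ?_
  rintro _ ⟨x, ⟨hx₀, hx₁⟩, rfl⟩
  rw [le_div_iff₀ (mul_pos (rpow_pos_of_pos hx₀ _) (sub_pos.2 hx₁)), ← rpow_natCast]
  exact mul_rpow_mul_one_sub_le (by exact_mod_cast (by omega : 1 ≤ q)) hx₀ hx₁.le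
end

section
/- Let q be an odd prime power with a ∈ F_q satisfying a² = 3, let b = 2⁻¹, and let M₂ = [[b, −ab], [ab, b]]. For any vectors m, n ∈ F_q^n, writing d = (m, n) ∈ (F_q^n)², the three points 0, d, and M₂d (with M₂ acting blockwise) form an equilateral triangle: the squared distances ‖d − 0‖², ‖M₂d − 0‖², and ‖M₂d − d‖² are all equal to m·m + n·n, where x·y denotes the standard bilinear form ∑ᵢ xᵢyᵢ on F_q^n. -/
/-- Standard bilinear form on `F^n`. -/
def dotF {F : Type*} [Field F] {n : ℕ} (x y : Fin n → F) : F := ∑ i, x i * y i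

theorem FiniteField.two_ne_zero_of_odd_card {F : Type*} [Field F] [Fintype F]
    (h : Odd (Fintype.card F)) : (2 : F) ≠ 0 :=
  Ring.two_ne_zero fun hchar =>
    Nat.not_even_iff_odd.mpr h (Nat.even_iff.mpr (FiniteField.even_card_iff_char_two.mp hchar))

theorem dotF_rotate_add_dotF_rotate {F : Type*} [Field F] {N : ℕ} {c s : F}
    (hcs : c ^ 2 + s ^ 2 = 1) (u v : Fin N → F) :
    dotF (c • u - s • v) (c • u - s • v) + dotF (s • u + c • v) (s • u + c • v)
      = dotF u u + dotF v v := by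
  simp only [dotF, Pi.smul_apply, Pi.sub_apply, Pi.add_apply, smul_eq_mul,
    ← Finset.sum_add_distrib]
  exact Finset.sum_congr rfl fun i _ => by linear_combination (u i * u i + v i * v i) * hcs

theorem stmt8_general {q N : ℕ} (hq : Odd q)
    (F : Type*) [Field F] [Fintype F] (hcard : Fintype.card F = q)
    (a : F) (ha : a ^ 2 = 3) (b : F) (hb : b = 2⁻¹)
    (m n : Fin N → F) :
    -- the three points are 0, d = (m, n), and M₂ d = (b•m − ab•n, ab•m + b•n)
    (dotF m m + dotF n n = dotF m m + dotF n n) ∧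
    (dotF (b • m - (a * b) • n) (b • m - (a * b) • n)
        + dotF ((a * b) • m + b • n) ((a * b) • m + b • n) = dotF m m + dotF n n) ∧
    (dotF (b • m - (a * b) • n - m) (b • m - (a * b) • n - m)
        + dotF ((a * b) • m + b • n - n) ((a * b) • m + b • n - n)
      = dotF m m + dotF n n) := by
  have htwo : (2 : F) ≠ 0 := FiniteField.two_ne_zero_of_odd_card (hcard ▸ hq)
  have hb2 : 2 * b = 1 := by rw [hb, mul_inv_cancel₀ htwo]
  -- both `M₂` and `M₂ - 1` are rotations, by angles `π/3` and `2π/3`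
  have hM : b ^ 2 + (a * b) ^ 2 = 1 := by linear_combination b ^ 2 * ha + (2 * b + 1) * hb2
  have hM1 : (b - 1) ^ 2 + (a * b) ^ 2 = 1 := by linear_combination b ^ 2 * ha + 2 * b * hb2
  refine ⟨rfl, dotF_rotate_add_dotF_rotate hM m n, ?_⟩
  rw [sub_right_comm, add_sub_assoc, ← dotF_rotate_add_dotF_rotate hM1 m n, sub_smul, sub_smul,
    one_smul, one_smul]

theorem stmt8 {q N : ℕ} (hq : Odd q) (hpp : IsPrimePow q)
    (F : Type*) [Field F] [Fintype F] (hcard : Fintype.card F = q)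
    (a : F) (ha : a ^ 2 = 3) (b : F) (hb : b = 2⁻¹)
    (m n : Fin N → F) :
    -- the three points are 0, d = (m, n), and M₂ d = (b•m − ab•n, ab•m + b•n)
    (dotF m m + dotF n n = dotF m m + dotF n n) ∧
    (dotF (b • m - (a * b) • n) (b • m - (a * b) • n)
        + dotF ((a * b) • m + b • n) ((a * b) • m + b • n) = dotF m m + dotF n n) ∧
    (dotF (b • m - (a * b) • n - m) (b • m - (a * b) • n - m)
        + dotF ((a * b) • m + b • n - n) ((a * b) • m + b • n - n)
      = dotF m m + dotF n n) :=
  stmt8_general hq F hcard a ha b hb m n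
end

section
/- Let q be an odd prime power, n, k positive integers, and M₁, M₂ ∈ F_q^{k×k} with M₁, M₂, and M₁ − M₂ invertible. Suppose A ⊆ (F_q^n)^k contains no triple of pairwise distinct points of the form x, x + M₁d, x + M₂d with x, d ∈ (F_q^n)^k (matrices acting blockwise). Then |A| ≤ 3·c_q^{kn}, where c_q = inf_{0<x<1} (1 − x^q)/(x^{(q−1)/3}(1 − x)). -/
/-!
The proof is the slice-rank polynomial method of Croot–Lev–Pach and Ellenberg–Gijswijt. With
`T = M₂ M₁⁻¹`, a point `x ∈ A` and `d = M₁⁻¹ (y - x)` give the pattern `(x, y, z)` exactly when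
`z = (1 - T) x + T y`, so on `A³` this linear equation has only the trivial solutions `x = y = z`.
Its indicator `∏ᵢ (1 - (z - (1 - T) x - T y)ᵢ ^ (q - 1))` is therefore the diagonal tensor of `A`,
and it is a polynomial of degree at most `(q - 1) m` in the `3m` coordinates (`m = kn`), with
individual degrees `< q` after reducing by `t ^ q = t`. Each monomial has degree at most
`(q - 1) m / 3` in one of `x`, `y`, `z`, so the tensor is a sum of `3 N` slices, where `N` counts
exponent vectors in `{0, …, q - 1}ᵐ` of degree at most `(q - 1) m / 3`; a diagonal tensor with
nonzero diagonal has slice rank `|A|`, whence `|A| ≤ 3 N`. Finally Rankin's trick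
`N xᴰ ≤ (1 + x + ⋯ + x^(q-1))ᵐ` for `0 < x < 1` gives `N ≤ c_qᵐ`.
-/

/-- Blockwise action of a `k × k` matrix over `F` on `(F^n)^k`. -/
def blockAct {F : Type*} [Field F] {k n : ℕ}
    (M : Matrix (Fin k) (Fin k) F) (v : Fin k → (Fin n → F)) : Fin k → (Fin n → F) :=
  fun j => ∑ s, M j s • v s

open Finset Module Matrix MvPolynomial

theorem Finset.sum_mul_sum_fiberwise_of_maps_to {ι J R : Type*} [CommSemiring R]
    [DecidableEq ι] {S : Finset ι} {s : Finset J} {π : J → ι} (hπ : ∀ j ∈ s, π j ∈ S)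
    (u : ι → R) (G : J → R) :
    ∑ i ∈ S, u i * ∑ j ∈ s with π j = i, G j = ∑ j ∈ s, u (π j) * G j := by
  rw [← sum_fiberwise_of_maps_to hπ]
  refine sum_congr rfl fun i _ => ?_
  rw [mul_sum]
  exact sum_congr rfl fun j hj => by rw [(mem_filter.1 hj).2]

section SliceRank

variable {F : Type*} [Field F]

theorem Submodule.exists_mem_finrank_le_card_support [DecidableEq F] {α : Type*} [Fintype α]
    (W : Submodule F (α → F)) : ∃ h ∈ W, finrank F W ≤ #{x | h x ≠ 0} := by
  classical
  suffices ∀ r ≤ finrank F W, ∃ h ∈ W, r ≤ #{x | h x ≠ 0} from this _ le_rfl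
  intro r
  induction r with
  | zero => exact fun _ => ⟨0, W.zero_mem, Nat.zero_le _⟩
  | succ r ih =>
    intro hr
    obtain ⟨h, hW, hr'⟩ := ih (by omega)
    set S : Finset α := {x | h x ≠ 0}
    rcases hr'.lt_or_eq with hlt | heq
    · exact ⟨h, hW, hlt⟩
    -- a nonzero `w ∈ W` vanishing on the support of `h` enlarges that support
    let ρ : W →ₗ[F] S → F := (LinearMap.pi fun x : S => LinearMap.proj (x : α)) ∘ₗ W.subtype
    have hker : LinearMap.ker ρ ≠ ⊥ := LinearMap.ker_ne_bot_of_finrank_lt <| by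
      rw [Module.finrank_fintype_fun_eq_card, Fintype.card_coe, ← heq]; omega
    obtain ⟨⟨w, hwW⟩, hwρ, hw0⟩ := Submodule.exists_mem_ne_zero_of_ne_bot hker
    have hwS : ∀ x ∈ S, w x = 0 := fun x hx => congrFun hwρ ⟨x, hx⟩
    obtain ⟨i, hi⟩ : ∃ i, w i ≠ 0 := by
      by_contra! h'; exact hw0 (Subtype.ext (funext h'))
    have hiS : i ∉ S := fun hiS => hi (hwS i hiS)
    refine ⟨h + w, W.add_mem hW hwW, ?_⟩
    have hsub : insert i S ⊆ ({x | (h + w) x ≠ 0} : Finset α) := by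
      intro x hx
      simp only [S, mem_insert, mem_filter, mem_univ, true_and] at hx hiS ⊢
      rcases hx with rfl | hx
      · simpa [not_not.1 hiS] using hi
      · simpa [hwS x (by simpa [S] using hx)] using hx
    have := card_le_card hsub
    rw [card_insert_of_notMem hiS] at this
    omega

theorem Matrix.card_support_le_of_diagonal_eq_sum [DecidableEq F] {α β : Type*} [Fintype α]
    [DecidableEq α] (d : α → F) (s : Finset β) (u v : β → α → F)
    (h : ∀ x y, diagonal d x y = ∑ e ∈ s, u e x * v e y) : #{x | d x ≠ 0} ≤ #s := by
  have hfac : diagonal d = of (fun x (e : s) => u e x) * of (fun (e : s) y => v e y) := by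
    ext x y
    rw [h, mul_apply, ← sum_coe_sort s]
    rfl
  rw [← Fintype.card_subtype, ← rank_diagonal, hfac, ← Fintype.card_coe s]
  exact (rank_mul_le_left _ _).trans (rank_le_card_width _)

theorem card_le_of_diagonal_eq_sum_slices {α β : Type*} [Fintype α] [DecidableEq α]
    (Sa Sb Sc : Finset β) (fa fb fc : β → α → F) (ga gb gc : β → α → α → F)
    (h : ∀ x y z, (if x = y ∧ y = z then 1 else 0 : F) =
      ∑ e ∈ Sa, fa e x * ga e y z + ∑ e ∈ Sb, fb e y * gb e x z +
        ∑ e ∈ Sc, fc e z * gc e x y) :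
    Fintype.card α ≤ #Sa + #Sb + #Sc := by
  classical
  let Λ : (α → F) →ₗ[F] Sc → F := (of fun (e : Sc) z => fc e z).mulVecLin
  have hker : Fintype.card α ≤ finrank F (LinearMap.ker Λ) + #Sc := by
    have := Λ.finrank_range_add_finrank_ker
    have := (LinearMap.range Λ).finrank_le
    rw [Module.finrank_fintype_fun_eq_card, Fintype.card_coe] at *
    omega
  obtain ⟨w, hw, hsupp⟩ := (LinearMap.ker Λ).exists_mem_finrank_le_card_support
  have hwc : ∀ e ∈ Sc, ∑ z, fc e z * w z = 0 := fun e he => congrFun hw ⟨e, he⟩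
  -- contracting the third variable against `w` kills the `Sc`-slices and leaves a matrix of
  -- rank at most `#Sa + #Sb`
  have hdiag : ∀ x y, diagonal w x y = ∑ e ∈ Sa.disjSum Sb,
      Sum.elim fa (fun e x => ∑ z, gb e x z * w z) e x *
        Sum.elim (fun e y => ∑ z, ga e y z * w z) fb e y := by
    intro x y
    have hc : ∑ z, (∑ e ∈ Sc, fc e z * gc e x y) * w z = 0 := by
      simp_rw [sum_mul]
      rw [sum_comm]
      refine sum_eq_zero fun e he => ?_
      calc ∑ z, fc e z * gc e x y * w z = gc e x y * ∑ z, fc e z * w z := by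
            rw [mul_sum]; exact sum_congr rfl fun z _ => by ring
        _ = 0 := by rw [hwc e he, mul_zero]
    calc diagonal w x y = ∑ z, (if x = y ∧ y = z then 1 else 0 : F) * w z := by
          by_cases hxy : x = y
          · subst hxy; simp
          · simp [hxy]
      _ = ∑ z, (∑ e ∈ Sa, fa e x * ga e y z) * w z +
            ∑ z, (∑ e ∈ Sb, fb e y * gb e x z) * w z := by
          simp_rw [h, add_mul, sum_add_distrib, hc, add_zero]
      _ = _ := by
          simp_rw [sum_disjSum, Sum.elim_inl, Sum.elim_inr, sum_mul, mul_sum]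
          rw [sum_comm, sum_comm (s := univ)]
          congr 1 <;> exact sum_congr rfl fun e _ => sum_congr rfl fun z _ => by ring
  have := Matrix.card_support_le_of_diagonal_eq_sum w _ _ _ hdiag
  rw [card_disjSum] at this
  omega

theorem card_le_of_diagonal_eq_sum_products {α ι J : Type*} [Fintype α] [DecidableEq α]
    (u : ι → α → F) (S : Finset ι) (s : Finset J) (c : J → F)
    (π₁ π₂ π₃ : J → ι) (hS : ∀ j ∈ s, π₁ j ∈ S ∨ π₂ j ∈ S ∨ π₃ j ∈ S)
    (h : ∀ x y z, (if x = y ∧ y = z then 1 else 0 : F) =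
      ∑ j ∈ s, c j * (u (π₁ j) x * u (π₂ j) y * u (π₃ j) z)) :
    Fintype.card α ≤ 3 * #S := by
  classical
  -- each term is assigned to the first of its factors indexed by `S`
  set s₁ := s.filter (π₁ · ∈ S)
  set s₂ := (s.filter (π₁ · ∉ S)).filter (π₂ · ∈ S)
  set s₃ := (s.filter (π₁ · ∉ S)).filter (π₂ · ∉ S)
  have h₁ : ∀ j ∈ s₁, π₁ j ∈ S := fun j hj => (mem_filter.1 hj).2
  have h₂ : ∀ j ∈ s₂, π₂ j ∈ S := fun j hj => (mem_filter.1 hj).2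
  have h₃ : ∀ j ∈ s₃, π₃ j ∈ S := by
    intro j hj
    simp only [s₃, mem_filter] at hj
    have := hS j hj.1.1
    tauto
  have := card_le_of_diagonal_eq_sum_slices S S S u u u
    (fun i y z => ∑ j ∈ s₁ with π₁ j = i, c j * (u (π₂ j) y * u (π₃ j) z))
    (fun i x z => ∑ j ∈ s₂ with π₂ j = i, c j * (u (π₁ j) x * u (π₃ j) z))
    (fun i x y => ∑ j ∈ s₃ with π₃ j = i, c j * (u (π₁ j) x * u (π₂ j) y))
    fun x y z => by
      simp only [sum_mul_sum_fiberwise_of_maps_to h₁, sum_mul_sum_fiberwise_of_maps_to h₂,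
        sum_mul_sum_fiberwise_of_maps_to h₃, h,
        ← sum_filter_add_sum_filter_not s (π₁ · ∈ S),
        ← sum_filter_add_sum_filter_not (s.filter (π₁ · ∉ S)) (π₂ · ∈ S), ← add_assoc]
      congr 1; congr 1
      all_goals exact sum_congr rfl fun j _ => by ring
  omega

end SliceRank

-- `0` for `t = 0`, otherwise the representative of `t` modulo `q - 1` in `{1, …, q - 1}`
def reduceExp (q t : ℕ) : ℕ := if t = 0 then 0 else (t - 1) % (q - 1) + 1

theorem reduceExp_le (q t : ℕ) : reduceExp q t ≤ t := by
  unfold reduceExp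
  split_ifs
  · omega
  · have := Nat.mod_le (t - 1) (q - 1); omega

theorem reduceExp_lt {q : ℕ} (hq : 1 < q) (t : ℕ) : reduceExp q t < q := by
  unfold reduceExp
  split_ifs
  · omega
  · have := Nat.mod_lt (t - 1) (show 0 < q - 1 by omega); omega

theorem FiniteField.pow_reduceExp {K : Type*} [Field K] [Fintype K] (x : K) (t : ℕ) :
    x ^ reduceExp (Fintype.card K) t = x ^ t := by
  set q := Fintype.card K
  rcases Nat.eq_zero_or_pos t with rfl | ht
  · simp [reduceExp]
  have hred : reduceExp q t = (t - 1) % (q - 1) + 1 := if_neg ht.ne'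
  rcases eq_or_ne x 0 with rfl | hx
  · rw [hred, zero_pow (by omega), zero_pow ht.ne']
  · have ht' : t = (q - 1) * ((t - 1) / (q - 1)) + reduceExp q t := by
      have := Nat.div_add_mod (t - 1) (q - 1); omega
    conv_rhs => rw [ht', pow_add, pow_mul, pow_card_sub_one_eq_one x hx, one_pow, one_mul]

noncomputable def capSetConstant (q : ℕ) : ℝ :=
  sInf ((fun x : ℝ => (1 - x ^ q) / (x ^ (((q : ℝ) - 1) / 3) * (1 - x))) '' Set.Ioo 0 1)

theorem Real.le_sInf_image_pow {S : Set ℝ} (hS : S.Nonempty) {g : ℝ → ℝ}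
    (hg : ∀ x ∈ S, 0 ≤ g x) {N : ℝ} (hN : 0 ≤ N) {m : ℕ} (h : ∀ x ∈ S, N ≤ g x ^ m) :
    N ≤ sInf (g '' S) ^ m := by
  rcases Nat.eq_zero_or_pos m with rfl | hm
  · obtain ⟨x, hx⟩ := hS
    simpa using h x hx
  have hm' : (0 : ℝ) < m := by exact_mod_cast hm
  have hroot : N ^ (m : ℝ)⁻¹ ≤ sInf (g '' S) := by
    refine le_csInf (hS.image g) ?_
    rintro _ ⟨x, hx, rfl⟩
    rw [Real.rpow_inv_le_iff_of_pos hN (hg x hx) hm', Real.rpow_natCast]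
    exact h x hx
  calc N = (N ^ (m : ℝ)⁻¹) ^ m := (Real.rpow_inv_natCast_pow hN hm.ne').symm
    _ ≤ sInf (g '' S) ^ m := pow_le_pow_left₀ (by positivity) hroot m

section Counting

variable {ι : Type*} [Fintype ι] [DecidableEq ι]

def smallExponents (ι : Type*) [Fintype ι] [DecidableEq ι] (q D : ℕ) : Finset (ι → ℕ) :=
  {e ∈ Fintype.piFinset fun _ : ι => range q | ∑ i, e i ≤ D}

theorem sum_piFinset_pow_sum {R : Type*} [CommSemiring R] (q : ℕ) (x : R) :
    ∑ e ∈ Fintype.piFinset (fun _ : ι => range q), x ^ (∑ i, e i) =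
      (∑ j ∈ range q, x ^ j) ^ Fintype.card ι := by
  rw [← card_univ, ← prod_const, prod_univ_sum]
  exact sum_congr rfl fun e _ => (prod_pow_eq_pow_sum _ _ _).symm

theorem card_smallExponents_mul_pow_le {x : ℝ} (hx0 : 0 ≤ x) (hx1 : x ≤ 1) (q D : ℕ) :
    #(smallExponents ι q D) * x ^ D ≤ (∑ j ∈ range q, x ^ j) ^ Fintype.card ι := by
  rw [← sum_piFinset_pow_sum, smallExponents, ← nsmul_eq_mul, ← sum_const]
  refine (sum_le_sum fun e he => pow_le_pow_of_le_one hx0 hx1 (mem_filter.1 he).2).trans ?_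
  exact sum_le_sum_of_subset_of_nonneg (filter_subset _ _) fun _ _ _ => by positivity

theorem one_sub_pow_div_mul_one_sub {x : ℝ} (hx : x ≠ 1) (q : ℕ) (y : ℝ) :
    (1 - x ^ q) / (y * (1 - x)) = (∑ j ∈ range q, x ^ j) / y := by
  rw [← geom_sum_mul_neg, mul_comm y, ← div_div, mul_div_cancel_right₀ _ (sub_ne_zero.2 hx.symm)]

theorem card_smallExponents_le_capSetConstant_pow {q : ℕ} (hq : 1 ≤ q) :
    (#(smallExponents ι q ((q - 1) * Fintype.card ι / 3)) : ℝ) ≤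
      capSetConstant q ^ Fintype.card ι := by
  set m := Fintype.card ι
  set D := (q - 1) * m / 3
  refine Real.le_sInf_image_pow ⟨1 / 2, by norm_num⟩ ?_ (Nat.cast_nonneg _) ?_ <;>
    rintro x ⟨hx0, hx1⟩ <;> rw [one_sub_pow_div_mul_one_sub hx1.ne]
  · exact div_nonneg (sum_nonneg fun j _ => by positivity) (by positivity)
  have hD : x ^ ((((q : ℝ) - 1) / 3) * m) ≤ x ^ D := by
    rw [← Real.rpow_natCast]
    refine Real.rpow_le_rpow_of_exponent_ge hx0 hx1.le ?_
    calc (D : ℝ) ≤ (((q - 1) * m : ℕ) : ℝ) / (3 : ℕ) := Nat.cast_div_le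
      _ = ((q : ℝ) - 1) / 3 * m := by push_cast [Nat.cast_sub hq]; ring
  rw [div_pow, le_div_iff₀ (by positivity), ← Real.rpow_natCast, ← Real.rpow_mul hx0.le]
  exact (mul_le_mul_of_nonneg_left hD (Nat.cast_nonneg _)).trans
    (card_smallExponents_mul_pow_le hx0.le hx1.le q D)

theorem reduceExp_mem_smallExponents {q D : ℕ} (hq : 1 < q) {e : ι → ℕ} (he : ∑ i, e i ≤ D) :
    (fun i => reduceExp q (e i)) ∈ smallExponents ι q D :=
  mem_filter.2 ⟨Fintype.mem_piFinset.2 fun _ => mem_range.2 (reduceExp_lt hq _),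
    (sum_le_sum fun _ _ => reduceExp_le _ _).trans he⟩

theorem reduceExp_mem_smallExponents_of_sum_lt {q D : ℕ} (hq : 1 < q) (d : ι ⊕ ι ⊕ ι → ℕ)
    (hd : ∑ v, d v < 3 * (D + 1)) :
    (fun i => reduceExp q (d (.inl i))) ∈ smallExponents ι q D ∨
      (fun i => reduceExp q (d (.inr (.inl i)))) ∈ smallExponents ι q D ∨
      (fun i => reduceExp q (d (.inr (.inr i)))) ∈ smallExponents ι q D := by
  rw [Fintype.sum_sum_type, Fintype.sum_sum_type] at hd
  by_contra! hbig
  have h₁ := mt (reduceExp_mem_smallExponents hq) hbig.1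
  have h₂ := mt (reduceExp_mem_smallExponents hq) hbig.2.1
  have h₃ := mt (reduceExp_mem_smallExponents hq) hbig.2.2
  omega

end Counting

section KerIndicator

variable {F W V σ ι : Type*} [Field F] [Fintype F] [AddCommGroup W] [Module F W]
  [AddCommGroup V] [Module F V] [Fintype σ] [DecidableEq σ] [Fintype ι]
  (B : Basis σ F W) (b : Basis ι F V) (K : W →ₗ[F] V)

noncomputable def LinearMap.kerIndicator : MvPolynomial σ F :=
  ∏ i, (1 - K.toMvPolynomial B b i ^ (Fintype.card F - 1))

theorem LinearMap.eval_kerIndicator [DecidableEq V] (w : W) :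
    eval (B.repr w) (K.kerIndicator B b) = if K w = 0 then 1 else 0 := by
  simp only [kerIndicator, map_prod, map_sub, map_one, map_pow, toMvPolynomial_eval_eq_apply,
    LinearEquiv.symm_apply_apply]
  split_ifs with hK
  · simp [hK, zero_pow (Nat.sub_pos_of_lt Fintype.one_lt_card).ne']
  · obtain ⟨i, hi⟩ := DFunLike.ne_iff.1 (b.repr.map_ne_zero_iff.2 hK)
    exact prod_eq_zero (mem_univ i) (by rw [FiniteField.pow_card_sub_one_eq_one _ hi, sub_self])

theorem LinearMap.totalDegree_kerIndicator_le :
    (K.kerIndicator B b).totalDegree ≤ (Fintype.card F - 1) * Fintype.card ι := by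
  refine (totalDegree_finsetProd _ _).trans ?_
  rw [mul_comm, ← smul_eq_mul, ← card_univ (α := ι), ← sum_const]
  refine sum_le_sum fun i _ => (totalDegree_sub _ _).trans (max_le (by simp) ?_)
  exact (totalDegree_pow _ _).trans <|
    (Nat.mul_le_mul_left _ (toMvPolynomial_totalDegree_le _ _ _ _)).trans (mul_one _).le

end KerIndicator

theorem Module.Basis.prod_repr_triple_pow {F V ι : Type*} [Field F] [AddCommGroup V] [Module F V]
    [Fintype ι] (b : Basis ι F V) (x y z : V) (d : ι ⊕ ι ⊕ ι → ℕ) :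
    ∏ v, (b.prod (b.prod b)).repr (x, y, z) v ^ d v =
      (∏ i, b.repr x i ^ d (.inl i)) * (∏ i, b.repr y i ^ d (.inr (.inl i))) *
        ∏ i, b.repr z i ^ d (.inr (.inr i)) := by
  simp only [Fintype.prod_sum_type, Basis.prod_repr_inl, Basis.prod_repr_inr, mul_assoc]

theorem card_le_of_trivial_solutions {F V : Type*} [Field F] [Fintype F]
    [AddCommGroup V] [Module F V] [FiniteDimensional F V] (La Lb : V →ₗ[F] V) (A : Finset V)
    (hA : ∀ a ∈ A, ∀ b ∈ A, ∀ c ∈ A, c = La a + Lb b ↔ a = b ∧ b = c) :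
    (#A : ℝ) ≤ 3 * capSetConstant (Fintype.card F) ^ finrank F V := by
  classical
  set q := Fintype.card F
  set m := finrank F V
  have hq : 1 < q := Fintype.one_lt_card
  let b : Basis (Fin m) F V := Module.finBasis F V
  let B := b.prod (b.prod b)
  let K : V × V × V →ₗ[F] V := LinearMap.snd F V V ∘ₗ LinearMap.snd F V (V × V) -
    La ∘ₗ LinearMap.fst F V (V × V) - Lb ∘ₗ LinearMap.fst F V V ∘ₗ LinearMap.snd F V (V × V)
  let P := K.kerIndicator B b
  let u : (Fin m → ℕ) → A → F := fun e x => ∏ i, b.repr x i ^ e i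
  have hu : ∀ (e : Fin m → ℕ) x, u (fun i => reduceExp q (e i)) x = ∏ i, b.repr x i ^ e i :=
    fun e x => prod_congr rfl fun i _ => FiniteField.pow_reduceExp _ _
  have key := card_le_of_diagonal_eq_sum_products u (smallExponents (Fin m) q ((q - 1) * m / 3))
    P.support (fun d => P.coeff d)
    (fun d i => reduceExp q (d (.inl i))) (fun d i => reduceExp q (d (.inr (.inl i))))
    (fun d i => reduceExp q (d (.inr (.inr i))))
    (fun d hd => reduceExp_mem_smallExponents_of_sum_lt hq d <| by
      have hdeg : ∑ v, d v ≤ (q - 1) * m := by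
        have := (le_totalDegree hd).trans (K.totalDegree_kerIndicator_le B b)
        rwa [Finsupp.sum_fintype _ _ fun _ => rfl, Fintype.card_fin] at this
      omega)
    fun x y z => by
      have hxyz : (x = y ∧ y = z) ↔ K (x, y, z) = 0 := by
        rw [Subtype.ext_iff, Subtype.ext_iff, ← hA _ x.2 _ y.2 _ z.2]
        simp [K, sub_sub, sub_eq_zero]
      rw [if_congr hxyz rfl rfl, ← K.eval_kerIndicator B b, eval_eq']
      exact sum_congr rfl fun d _ => by rw [b.prod_repr_triple_pow, hu, hu, hu]
  have hcount := card_smallExponents_le_capSetConstant_pow (ι := Fin m) hq.le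
  rw [Fintype.card_coe] at key
  rw [Fintype.card_fin] at hcount
  calc (#A : ℝ) ≤ 3 * #(smallExponents (Fin m) q ((q - 1) * m / 3)) := by exact_mod_cast key
    _ ≤ 3 * capSetConstant q ^ m := by gcongr

section BlockAct

variable {F : Type*} [Field F] {k n : ℕ}

theorem blockAct_eq_mul (M : Matrix (Fin k) (Fin k) F) (v : Fin k → Fin n → F) :
    blockAct M v = M * of v := by
  ext j i
  simp [blockAct, mul_apply]

def blockActLinearMap (M : Matrix (Fin k) (Fin k) F) :
    (Fin k → Fin n → F) →ₗ[F] Fin k → Fin n → F where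
  toFun := blockAct M
  map_add' u v := by simp only [blockAct_eq_mul]; exact Matrix.mul_add M (of u) (of v)
  map_smul' c v := by simp only [blockAct_eq_mul]; exact Matrix.mul_smul M c (of v)

theorem blockActLinearMap_apply (M : Matrix (Fin k) (Fin k) F) (v : Fin k → Fin n → F) :
    blockActLinearMap M v = blockAct M v := rfl

theorem blockAct_zero (M : Matrix (Fin k) (Fin k) F) : blockAct M (0 : Fin k → Fin n → F) = 0 :=
  (blockActLinearMap M).map_zero

theorem blockAct_sub (M : Matrix (Fin k) (Fin k) F) (u v : Fin k → Fin n → F) :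
    blockAct M (u - v) = blockAct M u - blockAct M v :=
  (blockActLinearMap M).map_sub u v

theorem blockAct_one (v : Fin k → Fin n → F) : blockAct 1 v = v := by
  rw [blockAct_eq_mul]; exact Matrix.one_mul (of v)

theorem blockAct_mul (M N : Matrix (Fin k) (Fin k) F) (v : Fin k → Fin n → F) :
    blockAct (M * N) v = blockAct M (blockAct N v) := by
  rw [blockAct_eq_mul, blockAct_eq_mul, blockAct_eq_mul]; exact Matrix.mul_assoc M N (of v)

theorem blockAct_sub_left (M N : Matrix (Fin k) (Fin k) F) (v : Fin k → Fin n → F) :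
    blockAct (M - N) v = blockAct M v - blockAct N v := by
  simp only [blockAct_eq_mul]; exact Matrix.sub_mul M N (of v)

theorem blockAct_ne_zero {M : Matrix (Fin k) (Fin k) F} (hM : IsUnit M)
    {v : Fin k → Fin n → F} (hv : v ≠ 0) : blockAct M v ≠ 0 := fun h => hv <| by
  rw [← blockAct_one v, ← nonsing_inv_mul M ((isUnit_iff_isUnit_det M).1 hM), blockAct_mul, h,
    blockAct_zero]

end BlockAct

def AvoidsPattern {F : Type*} [Field F] {k n : ℕ} (M₁ M₂ : Matrix (Fin k) (Fin k) F)
    (A : Finset (Fin k → Fin n → F)) : Prop :=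
  ∀ x d : Fin k → Fin n → F, x ≠ x + blockAct M₁ d → x ≠ x + blockAct M₂ d →
    x + blockAct M₁ d ≠ x + blockAct M₂ d →
    ¬(x ∈ A ∧ x + blockAct M₁ d ∈ A ∧ x + blockAct M₂ d ∈ A)

theorem AvoidsPattern.eq_and_eq_of_eq_blockAct {F : Type*} [Field F] {k n : ℕ}
    {M₁ M₂ : Matrix (Fin k) (Fin k) F} (h1 : IsUnit M₁) (h2 : IsUnit M₂)
    (h12 : IsUnit (M₁ - M₂)) {A : Finset (Fin k → Fin n → F)} (hA : AvoidsPattern M₁ M₂ A)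
    {a b c : Fin k → Fin n → F} (ha : a ∈ A) (hb : b ∈ A) (hc : c ∈ A)
    (habc : c = blockAct (1 - M₂ * M₁⁻¹) a + blockAct (M₂ * M₁⁻¹) b) :
    a = b ∧ b = c := by
  have hd₁ : b = a + blockAct M₁ (blockAct M₁⁻¹ (b - a)) := by
    rw [← blockAct_mul, mul_nonsing_inv M₁ ((isUnit_iff_isUnit_det M₁).1 h1), blockAct_one,
      add_sub_cancel]
  have hd₂ : c = a + blockAct M₂ (blockAct M₁⁻¹ (b - a)) := by
    rw [habc, ← blockAct_mul, blockAct_sub_left, blockAct_one, blockAct_sub]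
    abel
  generalize blockAct M₁⁻¹ (b - a) = d at hd₁ hd₂
  subst hd₁ hd₂
  by_cases hd : d = 0
  · simp [hd, blockAct_zero]
  refine (hA a d ?_ ?_ ?_ ⟨ha, hb, hc⟩).elim
  · simpa using blockAct_ne_zero h1 hd
  · simpa using blockAct_ne_zero h2 hd
  · simpa [← sub_eq_zero, ← blockAct_sub_left] using blockAct_ne_zero h12 hd

theorem stmt11_general {q k n : ℕ}
    (F : Type*) [Field F] [Fintype F] (hcard : Fintype.card F = q)
    (M₁ M₂ : Matrix (Fin k) (Fin k) F)
    (h1 : IsUnit M₁) (h2 : IsUnit M₂) (h12 : IsUnit (M₁ - M₂))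
    (A : Finset (Fin k → (Fin n → F)))
    (hA : ∀ x d : Fin k → (Fin n → F),
      x ≠ x + blockAct M₁ d → x ≠ x + blockAct M₂ d →
      x + blockAct M₁ d ≠ x + blockAct M₂ d →
      ¬(x ∈ A ∧ x + blockAct M₁ d ∈ A ∧ x + blockAct M₂ d ∈ A)) :
    (A.card : ℝ) ≤ 3 *
      (sInf ((fun x : ℝ => (1 - x ^ q) / (x ^ (((q : ℝ) - 1) / 3) * (1 - x))) ''
        Set.Ioo (0 : ℝ) 1)) ^ (k * n) := by
  subst hcard
  have hsol : ∀ a ∈ A, ∀ b ∈ A, ∀ c ∈ A,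
      c = blockActLinearMap (1 - M₂ * M₁⁻¹) a + blockActLinearMap (M₂ * M₁⁻¹) b ↔
        a = b ∧ b = c := by
    refine fun a ha b hb c hc => ⟨AvoidsPattern.eq_and_eq_of_eq_blockAct h1 h2 h12 hA ha hb hc, ?_⟩
    rintro ⟨rfl, rfl⟩
    rw [blockActLinearMap_apply, blockActLinearMap_apply, blockAct_sub_left, blockAct_one,
      sub_add_cancel]
  have := card_le_of_trivial_solutions _ _ A hsol
  rwa [Module.finrank_pi_fintype, Module.finrank_fin_fun, sum_const, card_univ, Fintype.card_fin,
    smul_eq_mul] at this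

theorem stmt11 {q k n : ℕ} (hq : Odd q) (hpp : IsPrimePow q) (hk : 0 < k) (hn : 0 < n)
    (F : Type*) [Field F] [Fintype F] (hcard : Fintype.card F = q)
    (M₁ M₂ : Matrix (Fin k) (Fin k) F)
    (h1 : IsUnit M₁) (h2 : IsUnit M₂) (h12 : IsUnit (M₁ - M₂))
    (A : Finset (Fin k → (Fin n → F)))
    (hA : ∀ x d : Fin k → (Fin n → F),
      x ≠ x + blockAct M₁ d → x ≠ x + blockAct M₂ d →
      x + blockAct M₁ d ≠ x + blockAct M₂ d →
      ¬(x ∈ A ∧ x + blockAct M₁ d ∈ A ∧ x + blockAct M₂ d ∈ A)) :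
    (A.card : ℝ) ≤ 3 *
      (sInf ((fun x : ℝ => (1 - x ^ q) / (x ^ (((q : ℝ) - 1) / 3) * (1 - x))) ''
        Set.Ioo (0 : ℝ) 1)) ^ (k * n) :=
  stmt11_general F hcard M₁ M₂ h1 h2 h12 A hA
end

section
/- Let A be a finite set, F a field, k ≥ 2, and T : A^k → F a function with T(a₁, …, a_k) ≠ 0 if and only if a₁ = a₂ = ⋯ = a_k. Then the slice rank of T equals |A|. -/
/-- A slice: a function on `A^k` that factors as (function of one coordinate) times
(function of the remaining coordinates). -/
def IsSlice {A F : Type*} [Field F] {k : ℕ} (T : (Fin k → A) → F) : Prop :=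
  ∃ (i : Fin k) (f : A → F) (g : ({j : Fin k // j ≠ i} → A) → F),
    ∀ v, T v = f (v i) * g (fun j => v j.1)

/-- The slice rank of a `k`-tensor on `A`. -/
noncomputable def sliceRank {A F : Type*} [Field F] {k : ℕ} (T : (Fin k → A) → F) : ℕ :=
  sInf {r | ∃ c : Fin r → ((Fin k → A) → F),
    (∀ j, IsSlice (c j)) ∧ ∀ v, T v = ∑ j, c j v}

/-!
Splitting along the value of one coordinate shows that the slice rank is at most `|A|`.
The lower bound is by induction on `k`. For `k = 2`, a sum of `r` slices is a matrix of
rank at most `r`, while `T` is a diagonal matrix with nonzero diagonal.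
For `k > 2`, let `S` be the set of slices sitting on the last coordinate. Some `h : A → F`
orthogonal to their one-variable factors has at least `|A| - |S|` nonzero values, because a
subspace of `F^A` of dimension `d` contains a vector with at least `d` nonzero coordinates.
Contracting the last coordinate of `T` against `h` kills the slices in `S` and keeps the
other ones slices. Restricted to the support of `h`, the result is again a diagonal tensor with
nonzero diagonal, now of order `k - 1` and a sum of `r - |S|` slices.
-/

open Finset Function Module

section SliceRank

variable {A B F ι : Type*} [Field F]

section Slice

variable {k : ℕ}

theorem isSlice_iff_exists_update {T : (Fin k → A) → F} :
    IsSlice T ↔ ∃ (i : Fin k) (f : A → F) (G : (Fin k → A) → F),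
      (∀ v x, G (update v i x) = G v) ∧ ∀ v, T v = f (v i) * G v := by
  constructor
  · rintro ⟨i, f, g, hT⟩
    exact ⟨i, f, fun v => g (fun j => v j.1),
      fun v x => congrArg g (funext fun j => update_of_ne j.2 _ _), hT⟩
  · rintro ⟨i, f, G, hG, hT⟩
    rcases isEmpty_or_nonempty A with hA | ⟨⟨a⟩⟩
    · exact ⟨i, f, 0, fun v => isEmptyElim (v i)⟩
    refine ⟨i, f, fun w => G (fun p => if hp : p = i then a else w ⟨p, hp⟩), fun v => ?_⟩
    show T v = f (v i) * G (fun p => if hp : p = i then a else v p)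
    rw [hT, ← hG (fun p => if hp : p = i then a else v p) (v i)]
    congr 2
    funext p
    by_cases hp : p = i
    · subst hp; simp
    · simp [hp]

theorem IsSlice.comp {T : (Fin k → A) → F} (hT : IsSlice T) (φ : B → A) :
    IsSlice (fun v => T (φ ∘ v)) := by
  obtain ⟨i, f, g, hfg⟩ := hT
  exact ⟨i, f ∘ φ, fun w => g (φ ∘ w), fun v => hfg _⟩

theorem exists_isSlice_sum_fin [Fintype ι] {T : (Fin k → A) → F} (c : ι → (Fin k → A) → F)
    (hc : ∀ j, IsSlice (c j)) (hsum : ∀ v, T v = ∑ j, c j v) :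
    ∃ c' : Fin (Fintype.card ι) → (Fin k → A) → F,
      (∀ j, IsSlice (c' j)) ∧ ∀ v, T v = ∑ j, c' j v :=
  ⟨c ∘ (Fintype.equivFin ι).symm, fun _ => hc _,
    fun v => (hsum v).trans (Equiv.sum_comp _ (fun j => c j v)).symm⟩

theorem sliceRank_le_card_of_sum [Fintype ι] {T : (Fin k → A) → F} (c : ι → (Fin k → A) → F)
    (hc : ∀ j, IsSlice (c j)) (hsum : ∀ v, T v = ∑ j, c j v) :
    sliceRank T ≤ Fintype.card ι :=
  Nat.sInf_le (exists_isSlice_sum_fin c hc hsum)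

theorem exists_isSlice_sum_of_coord [Fintype A] (i : Fin k) (T : (Fin k → A) → F) :
    ∃ c : A → (Fin k → A) → F, (∀ a, IsSlice (c a)) ∧ ∀ v, T v = ∑ a, c a v := by
  classical
  refine ⟨fun a v => (if v i = a then 1 else 0) * T (update v i a), fun a => ?_, fun v => ?_⟩
  · exact isSlice_iff_exists_update.2
      ⟨i, fun x => if x = a then 1 else 0, fun v => T (update v i a),
        fun v x => by simp only [update_idem], fun v => rfl⟩
  · simp [ite_mul]

theorem sliceRank_le_card [Fintype A] (i : Fin k) (T : (Fin k → A) → F) :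
    sliceRank T ≤ Fintype.card A :=
  let ⟨c, hc, hsum⟩ := exists_isSlice_sum_of_coord i T
  sliceRank_le_card_of_sum c hc hsum

theorem exists_isSlice_sum_sliceRank [Fintype A] (i : Fin k) (T : (Fin k → A) → F) :
    ∃ c : Fin (sliceRank T) → (Fin k → A) → F, (∀ j, IsSlice (c j)) ∧ ∀ v, T v = ∑ j, c j v :=
  let ⟨c, hc, hsum⟩ := exists_isSlice_sum_of_coord i T
  Nat.sInf_mem (s := {r | ∃ c : Fin r → (Fin k → A) → F, (∀ j, IsSlice (c j)) ∧
    ∀ v, T v = ∑ j, c j v}) ⟨_, exists_isSlice_sum_fin c hc hsum⟩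

end Slice

section Support

variable [Fintype A]

theorem exists_mem_support_ssubset (W : Submodule F (A → F)) {h : A → F} (hW : h ∈ W)
    (hlt : Nat.card (support h) < finrank F W) : ∃ h' ∈ W, support h ⊂ support h' := by
  classical
  let restrict : W →ₗ[F] (support h → F) := (LinearMap.funLeft F F Subtype.val) ∘ₗ W.subtype
  have hker : LinearMap.ker restrict ≠ ⊥ := LinearMap.ker_ne_bot_of_finrank_lt <| by
    rwa [finrank_fintype_fun_eq_card, Fintype.card_eq_nat_card]
  obtain ⟨w, hw, hw0⟩ := Submodule.exists_mem_ne_zero_of_ne_bot hker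
  have hw_supp : ∀ a ∈ support h, (w : A → F) a = 0 := fun a ha =>
    congrFun (LinearMap.mem_ker.1 hw) ⟨a, ha⟩
  obtain ⟨b, hb⟩ : ∃ b, (w : A → F) b ≠ 0 := by
    by_contra! H
    exact hw0 (Subtype.ext (funext H))
  have hb_supp : b ∉ support h := fun hb' => hb (hw_supp b hb')
  refine ⟨h + w, W.add_mem hW w.2, (Set.ssubset_iff_of_subset fun a ha => ?_).2 ⟨b, ?_, hb_supp⟩⟩
  · simpa [hw_supp a ha] using ha
  · simpa [notMem_support.1 hb_supp] using hb

theorem exists_finrank_le_card_support (W : Submodule F (A → F)) :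
    ∃ h ∈ W, finrank F W ≤ Nat.card (support h) := by
  obtain ⟨_, ⟨h, hW, rfl⟩, hmax⟩ :=
    wellFounded_gt.has_min (support '' (W : Set (A → F))) ⟨_, 0, W.zero_mem, rfl⟩
  refine ⟨h, hW, not_lt.1 fun hlt => ?_⟩
  obtain ⟨h', hW', hss⟩ := exists_mem_support_ssubset W hW hlt
  exact hmax _ ⟨h', hW', rfl⟩ hss

end Support

section Contract

variable [Fintype A] {m : ℕ}

def contract (T : (Fin (m + 1) → A) → F) (h : A → F) : (Fin m → A) → F :=
  fun v => ∑ x, T (Fin.snoc v x) * h x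

theorem contract_apply_sum [Fintype ι] {T : (Fin (m + 1) → A) → F}
    {c : ι → (Fin (m + 1) → A) → F} (hsum : ∀ v, T v = ∑ j, c j v) (h : A → F)
    (v : Fin m → A) : contract T h v = ∑ j, contract (c j) h v := by
  simp only [contract, hsum, sum_mul]
  exact sum_comm

theorem isSlice_contract {T : (Fin (m + 1) → A) → F} {i : Fin m} {f : A → F}
    {G : (Fin (m + 1) → A) → F} (hG : ∀ v x, G (update v i.castSucc x) = G v)
    (hT : ∀ v, T v = f (v i.castSucc) * G v) (h : A → F) : IsSlice (contract T h) := by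
  refine isSlice_iff_exists_update.2
    ⟨i, f, fun v => ∑ x, G (Fin.snoc v x) * h x, fun v y => ?_, fun v => ?_⟩
  · simp only [Fin.snoc_update, hG]
  · simp only [contract, hT, Fin.snoc_castSucc, mul_sum, mul_assoc]

theorem contract_eq_zero_of_last {T : (Fin (m + 1) → A) → F} {f : A → F}
    {G : (Fin (m + 1) → A) → F} (hG : ∀ v x, G (update v (Fin.last m) x) = G v)
    (hT : ∀ v, T v = f (v (Fin.last m)) * G v) {h : A → F} (hfh : ∑ x, f x * h x = 0) :
    contract T h = 0 := by
  funext v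
  rcases isEmpty_or_nonempty A with hA | ⟨⟨a⟩⟩
  · simp [contract]
  have hGa : ∀ x, G (Fin.snoc v x) = G (Fin.snoc v a) := fun x => by
    rw [← Fin.update_snoc_last (x := a), hG]
  simp only [contract, hT, Fin.snoc_last, hGa, mul_right_comm _ (G _), ← sum_mul, hfh,
    zero_mul, Pi.zero_apply]

theorem contract_apply_eq_zero {T : (Fin (m + 1) → A) → F}
    (hoff : ∀ v i j, v i ≠ v j → T v = 0) (h : A → F) {v : Fin m → A} {i j : Fin m}
    (hij : v i ≠ v j) : contract T h v = 0 :=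
  sum_eq_zero fun x _ => by
    rw [hoff _ i.castSucc j.castSucc (by simpa using hij), zero_mul]

theorem contract_apply_const {T : (Fin (m + 2) → A) → F}
    (hoff : ∀ v i j, v i ≠ v j → T v = 0) (h : A → F) (a : A) :
    contract T h (fun _ => a) = T (fun _ => a) * h a := by
  rw [contract, sum_eq_single a]
  · congr 2
    funext p
    induction p using Fin.lastCases <;> simp
  · intro x _ hx
    rw [hoff _ 0 (Fin.last _) (by simpa using hx.symm), zero_mul]
  · simp

theorem exists_contract_sum_isSlice [Fintype ι] [DecidableEq ι] {T : (Fin (m + 1) → A) → F}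
    (c : ι → (Fin (m + 1) → A) → F) (hc : ∀ j, IsSlice (c j)) (hsum : ∀ v, T v = ∑ j, c j v) :
    ∃ (S : Finset ι) (h : A → F), Fintype.card A ≤ Nat.card (support h) + #S ∧
      (∀ j ∉ S, IsSlice (contract (c j) h)) ∧
      ∀ v, contract T h v = ∑ j ∈ Sᶜ, contract (c j) h v := by
  choose i f G hG hcG using fun j => isSlice_iff_exists_update.1 (hc j)
  let S := univ.filter fun j => i j = Fin.last m
  let Φ : (A → F) →ₗ[F] (S → F) := Matrix.mulVecLin (Matrix.of fun (j : S) a => f j a)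
  obtain ⟨h, hker, hcard⟩ := exists_finrank_le_card_support (LinearMap.ker Φ)
  have hrank : Fintype.card A ≤ finrank F (LinearMap.ker Φ) + #S := by
    have := Φ.finrank_range_add_finrank_ker
    have := (LinearMap.range Φ).finrank_le
    simp only [finrank_fintype_fun_eq_card, Fintype.card_coe] at *
    omega
  have hdead : ∀ j ∈ S, contract (c j) h = 0 := fun j hj => by
    have hij : i j = Fin.last m := (mem_filter.1 hj).2
    refine contract_eq_zero_of_last (hij ▸ hG j) (hij ▸ hcG j) ?_
    simpa [Φ, Matrix.mulVec, dotProduct] using congrFun (LinearMap.mem_ker.1 hker) ⟨j, hj⟩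
  refine ⟨S, h, by omega, fun j hj => ?_, fun v => ?_⟩
  · obtain ⟨i', hi'⟩ | hij := Fin.eq_castSucc_or_eq_last (i j)
    · exact isSlice_contract (hi' ▸ hG j) (hi' ▸ hcG j) h
    · exact absurd (mem_filter.2 ⟨mem_univ j, hij⟩) hj
  · rw [contract_apply_sum hsum, ← sum_add_sum_compl S, sum_eq_zero fun j hj => by
      rw [hdead j hj, Pi.zero_apply], zero_add]

end Contract

theorem IsSlice.exists_mul_of_two {T : (Fin 2 → A) → F} (hT : IsSlice T) :
    ∃ u w : A → F, ∀ a b, T ![a, b] = u a * w b := by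
  obtain ⟨i, f, G, hG, hfG⟩ := isSlice_iff_exists_update.1 hT
  obtain rfl | rfl : i = 0 ∨ i = 1 := by fin_cases i <;> simp
  · refine ⟨f, fun b => G ![b, b], fun a b => ?_⟩
    have hab : update ![b, b] 0 a = ![a, b] := by
      funext p
      fin_cases p <;> simp
    rw [hfG, ← hab, hG]
    simp
  · refine ⟨fun a => G ![a, a], f, fun a b => ?_⟩
    have hab : update ![a, a] 1 b = ![a, b] := by
      funext p
      fin_cases p <;> simp
    rw [hfG, ← hab, hG, mul_comm]
    simp

section LowerBound

variable [Fintype A] [Fintype ι]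

theorem card_le_card_of_sum_isSlice_two {T : (Fin 2 → A) → F}
    (hoff : ∀ v i j, v i ≠ v j → T v = 0) (hdiag : ∀ a, T (fun _ => a) ≠ 0)
    (c : ι → (Fin 2 → A) → F) (hc : ∀ j, IsSlice (c j)) (hsum : ∀ v, T v = ∑ j, c j v) :
    Fintype.card A ≤ Fintype.card ι := by
  classical
  choose u w huw using fun j => (hc j).exists_mul_of_two
  have hT : Matrix.diagonal (fun a => T (fun _ => a)) =
      Matrix.of (fun a j => u j a) * Matrix.of (fun j b => w j b) := by
    ext a b
    simp only [Matrix.mul_apply, Matrix.of_apply, ← huw, ← hsum]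
    rcases eq_or_ne a b with rfl | hab
    · rw [Matrix.diagonal_apply_eq]
      congr
      funext p
      fin_cases p <;> rfl
    · rw [Matrix.diagonal_apply_ne _ hab, hoff ![a, b] 0 1 (by simpa using hab)]
  calc Fintype.card A = (Matrix.diagonal fun a => T fun _ => a).rank := by
        rw [Matrix.rank_diagonal, Fintype.card_congr (Equiv.subtypeUnivEquiv hdiag)]
    _ ≤ (Matrix.of fun a j => u j a).rank := hT ▸ Matrix.rank_mul_le_left _ _
    _ ≤ Fintype.card ι := Matrix.rank_le_card_width _

theorem card_le_card_of_sum_isSlice {n : ℕ} {T : (Fin (n + 2) → A) → F}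
    (hoff : ∀ v i j, v i ≠ v j → T v = 0) (hdiag : ∀ a, T (fun _ => a) ≠ 0)
    (c : ι → (Fin (n + 2) → A) → F) (hc : ∀ j, IsSlice (c j)) (hsum : ∀ v, T v = ∑ j, c j v) :
    Fintype.card A ≤ Fintype.card ι := by
  induction n generalizing A ι with
  | zero => exact card_le_card_of_sum_isSlice_two hoff hdiag c hc hsum
  | succ n ih =>
    classical
    obtain ⟨S, h, hcard, hslice, hsum'⟩ := exists_contract_sum_isSlice c hc hsum
    have hle := ih (T := fun v : Fin (n + 2) → support h => contract T h (Subtype.val ∘ v))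
      (fun v i j hij => contract_apply_eq_zero hoff h (Subtype.val_injective.ne hij))
      (fun a => by
        change contract T h (fun _ => a.1) ≠ 0
        rw [contract_apply_const hoff]
        exact mul_ne_zero (hdiag a) a.2)
      (fun j : ↥Sᶜ => fun v => contract (c j) h (Subtype.val ∘ v))
      (fun j => (hslice j (mem_compl.1 j.2)).comp _)
      (fun v => (hsum' _).trans (sum_coe_sort Sᶜ _).symm)
    rw [Fintype.card_coe, card_compl, Fintype.card_eq_nat_card] at hle
    have := S.card_le_univ
    omega

end LowerBound

end SliceRank

theorem stmt14 {A F : Type*} [Fintype A] [Field F] {k : ℕ} (hk : 2 ≤ k)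
    (T : (Fin k → A) → F)
    (hT : ∀ v : Fin k → A, T v ≠ 0 ↔ ∀ i j : Fin k, v i = v j) :
    sliceRank T = Fintype.card A := by
  obtain ⟨n, rfl⟩ : ∃ n, k = n + 2 := ⟨k - 2, by omega⟩
  have hoff : ∀ v i j, v i ≠ v j → T v = 0 := fun v i j hij =>
    not_not.1 fun hv => hij ((hT v).1 hv i j)
  have hdiag : ∀ a, T (fun _ => a) ≠ 0 := fun a => (hT _).2 fun _ _ => rfl
  obtain ⟨c, hc, hsum⟩ := exists_isSlice_sum_sliceRank 0 T
  refine (sliceRank_le_card 0 T).antisymm ?_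
  simpa using card_le_card_of_sum_isSlice hoff hdiag c hc hsum
end
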